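/- For every q ≥ 1 there exists C > 0 such that for all x, z ∈ (0,∞), ∫_{Γ_+(x)} |t ∂_t P_t(y+z)|^q dt dy / t² ≤ C / (x+z)^q, where P_t is the classical Poisson kernel and Γ_+(x) = {(y,t) ∈ (0,∞)×(0,∞) : |y−x| < t}. -/

import Mathlib

open MeasureTheory Set
open scoped ENNReal
open intervalIntegral

/-- The classical one-dimensional Poisson kernel. -/
noncomputable def classicalPoissonKernel (t u : ℝ) : ℝ := (1 / Real.pi) * (t / (t ^ 2 + u ^ 2))

lemma poisson_deriv (u t : ℝ) (ht : 0 < t) :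
    deriv (fun t => classicalPoissonKernel t u) t = (1 / Real.pi) * ((u^2 - t^2) / (t^2 + u^2)^2) := by
  have hd : (t^2 + u^2) ≠ 0 := by positivity
  have h2 : HasDerivAt (fun t : ℝ => t^2 + u^2) (2*t) t := by
    simpa using (hasDerivAt_pow 2 t).add_const (u^2)
  have h3 := ((hasDerivAt_id t).div h2 hd).const_mul (1 / Real.pi)
  have h4 : HasDerivAt (fun t => classicalPoissonKernel t u)
      ((1 / Real.pi) * ((u^2 - t^2) / (t^2 + u^2)^2)) t := by
    have he : (1 / Real.pi) * ((u^2 - t^2) / (t^2 + u^2)^2)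
        = (1 / Real.pi) * ((1 * (t^2+u^2) - t * (2*t)) / (t^2+u^2)^2) := by ring
    rw [he]; exact h3
  exact h4.deriv

theorem lusin_bound_reflected (q : ℝ) (hq : 1 ≤ q) :
    ∃ C : ℝ, 0 < C ∧ ∀ x z : ℝ, 0 < x → 0 < z →
      (∫ w in {w : ℝ × ℝ | 0 < w.1 ∧ 0 < w.2 ∧ |w.1 - x| < w.2},
          |w.2 * deriv (fun t => classicalPoissonKernel t (w.1 + z)) w.2| ^ q / w.2 ^ 2)
        ≤ C / (x + z) ^ q := by
  have hq0 : (0:ℝ) < q := lt_of_lt_of_le one_pos hq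
  refine ⟨2 ^ (q + 2) / q, by positivity, ?_⟩
  intro x z hx hz
  set s := x + z with hsdef
  have hs0 : (0:ℝ) < s := by positivity
  -- pointwise bound by a function of t only
  have key : ∀ y t : ℝ, 0 < t → x - t < y →
      |t * ((1 / Real.pi) * (((y+z)^2 - t^2) / (t^2 + (y+z)^2)^2))| ^ q / t ^ 2
        ≤ (if t ≤ s/2 then 4*t/s^2 else 1/t) ^ q / t ^ 2 := by
    intro y t ht hy
    set u := y + z with hu
    have hu2 : (0:ℝ) < t^2 + u^2 := by positivity
    have h1 : |t * ((1 / Real.pi) * ((u^2 - t^2) / (t^2 + u^2)^2))| ≤ t / (t^2 + u^2) := by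
      have habs : |u^2 - t^2| ≤ t^2 + u^2 := by
        rw [abs_le]; constructor <;> nlinarith
      have habsrw : |t * ((1 / Real.pi) * ((u^2 - t^2) / (t^2 + u^2)^2))|
          = t * (1 / Real.pi * (|u ^ 2 - t ^ 2| / (t ^ 2 + u ^ 2) ^ 2)) := by
        simp only [abs_mul, abs_div, abs_one, abs_of_pos ht, abs_of_pos Real.pi_pos,
          abs_of_pos (by positivity : (0:ℝ) < (t^2+u^2)^2)]
      rw [habsrw]
      have hpi : 1 / Real.pi ≤ 1 := by
        rw [div_le_one Real.pi_pos]; linarith [Real.pi_gt_three]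
      calc t * (1 / Real.pi * (|u ^ 2 - t ^ 2| / (t ^ 2 + u ^ 2) ^ 2))
          ≤ t * (1 * ((t^2 + u^2) / (t ^ 2 + u ^ 2) ^ 2)) := by gcongr
        _ = t / (t^2 + u^2) := by field_simp
    have h2 : t / (t^2 + u^2) ≤ (if t ≤ s/2 then 4*t/s^2 else 1/t) := by
      split_ifs with hts
      · have hus : s/2 ≤ u := by
          have : s - t < u := by simp only [hu, hsdef]; linarith
          linarith
        have hsq : s^2/4 ≤ t^2 + u^2 := by nlinarith
        calc t / (t^2+u^2) ≤ t / (s^2/4) := by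
              apply div_le_div_of_nonneg_left ht.le (by positivity) hsq
          _ = 4*t/s^2 := by field_simp
      · calc t / (t^2+u^2) ≤ t / t^2 := by
              apply div_le_div_of_nonneg_left ht.le (by positivity) (by nlinarith)
          _ = 1/t := by field_simp
    have hmono := Real.rpow_le_rpow (abs_nonneg _) (le_trans h1 h2) hq0.le
    exact div_le_div_of_nonneg_right hmono (by positivity)
  -- names for everything
  set B : ℝ → ℝ := fun t => (if t ≤ s/2 then 4*t/s^2 else 1/t) ^ q / t ^ 2 with hB
  have hBmeas : Measurable B := by
    have : Measurable (fun t : ℝ => if t ≤ s/2 then 4*t/s^2 else 1/t) :=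
      Measurable.ite (measurableSet_le measurable_id measurable_const)
        (by fun_prop) (by fun_prop)
    fun_prop
  set G : ℝ × ℝ → ℝ≥0∞ := fun w => ENNReal.ofReal (B w.2) with hG
  have hGmeas : Measurable G := (ENNReal.measurable_ofReal.comp hBmeas).comp measurable_snd
  set S : Set (ℝ × ℝ) := {w : ℝ × ℝ | 0 < w.1 ∧ 0 < w.2 ∧ |w.1 - x| < w.2} with hS
  set S' : Set (ℝ × ℝ) := {w : ℝ × ℝ | 0 < w.2 ∧ |w.1 - x| < w.2} with hS'
  have hS'm : MeasurableSet S' := by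
    apply MeasurableSet.inter
    · exact measurableSet_lt measurable_const measurable_snd
    · exact measurableSet_lt ((measurable_fst.sub measurable_const).abs) measurable_snd
  have hSm : MeasurableSet S := by
    have hdec : S = {w : ℝ × ℝ | 0 < w.1} ∩ S' := by
      ext w; simp only [hS, hS', mem_setOf_eq, mem_inter_iff, and_assoc]
    rw [hdec]
    exact (measurableSet_lt measurable_const measurable_fst).inter hS'm
  have hsub : S ⊆ S' := fun w hw => ⟨hw.2.1, hw.2.2⟩
  -- the explicit integrand
  set F : ℝ × ℝ → ℝ := fun w =>
    |w.2 * deriv (fun t => classicalPoissonKernel t (w.1 + z)) w.2| ^ q / w.2 ^ 2 with hF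
  set f : ℝ × ℝ → ℝ := fun w =>
    |w.2 * ((1 / Real.pi) * (((w.1+z)^2 - w.2^2) / (w.2^2 + (w.1+z)^2)^2))| ^ q / w.2 ^ 2
    with hf
  have hfmeas : Measurable f := by fun_prop
  have hFf : ∀ w ∈ S, F w = f w := by
    intro w hw
    simp only [hF, hf]
    rw [poisson_deriv _ _ hw.2.1]
  have hFnn : ∀ w, 0 ≤ F w := by
    intro w
    apply div_nonneg _ (by positivity)
    exact Real.rpow_nonneg (abs_nonneg _) q
  -- inner integral over y for fixed t
  have hinner : ∀ t : ℝ, (∫⁻ y, S'.indicator G (y, t))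
      = (Ioi (0:ℝ)).indicator (fun t => ENNReal.ofReal (2*t) * ENNReal.ofReal (B t)) t := by
    intro t
    rcases le_or_gt t 0 with ht | ht
    · rw [indicator_of_notMem (by simpa using ht.not_gt)]
      have hz' : ∀ y : ℝ, S'.indicator G (y, t) = 0 := by
        intro y
        apply indicator_of_notMem
        simp only [hS', mem_setOf_eq, not_and]
        intro h; exact absurd h ht.not_gt
      simp [hz']
    · rw [indicator_of_mem (by simpa using ht)]
      have hrw : ∀ y : ℝ, S'.indicator G (y, t)
          = (Ioo (x - t) (x + t)).indicator (fun _ => ENNReal.ofReal (B t)) y := by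
        intro y
        by_cases hy : y ∈ Ioo (x - t) (x + t)
        · rw [indicator_of_mem hy, indicator_of_mem]
          simp only [hS', mem_setOf_eq]
          refine ⟨ht, ?_⟩
          rw [abs_sub_lt_iff]
          obtain ⟨h1, h2⟩ := hy
          constructor <;> linarith
        · rw [indicator_of_notMem hy, indicator_of_notMem]
          simp only [hS', mem_setOf_eq, not_and]
          intro _
          rw [abs_sub_lt_iff]
          simp only [mem_Ioo, not_and_or, not_lt] at hy
          rcases hy with h | h
          · intro ⟨_, h2⟩; linarith
          · intro ⟨h1, _⟩; linarith
      simp only [hrw]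
      rw [lintegral_indicator_const measurableSet_Ioo, Real.volume_Ioo]
      rw [mul_comm]
      congr 1
      ring_nf
  -- Fubini
  have hcompute : ∫⁻ w in S', G w
      = ∫⁻ t in Ioi (0:ℝ), ENNReal.ofReal (2*t) * ENNReal.ofReal (B t) := by
    rw [← lintegral_indicator hS'm G, Measure.volume_eq_prod,
      lintegral_prod_symm _ (hGmeas.indicator hS'm).aemeasurable]
    rw [lintegral_congr hinner, lintegral_indicator measurableSet_Ioi]
  -- 1-d integral computation
  set c := s/2 with hc
  have hc0 : (0:ℝ) < c := by positivity
  have hsplit : ∫⁻ t in Ioi (0:ℝ), ENNReal.ofReal (2*t) * ENNReal.ofReal (B t)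
      = (∫⁻ t in Ioc (0:ℝ) c, ENNReal.ofReal (2*t) * ENNReal.ofReal (B t))
        + ∫⁻ t in Ioi c, ENNReal.ofReal (2*t) * ENNReal.ofReal (B t) := by
    rw [← Ioc_union_Ioi_eq_Ioi hc0.le, lintegral_union measurableSet_Ioi (Ioc_disjoint_Ioi le_rfl)]
  have hA : ∫⁻ t in Ioc (0:ℝ) c, ENNReal.ofReal (2*t) * ENNReal.ofReal (B t)
      = ENNReal.ofReal (2*(4/s^2)^q * (c^q/q)) := by
    rw [setLIntegral_congr_fun measurableSet_Ioc (fun t ht => ?_)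
      (g := fun t => ENNReal.ofReal ((2*(4/s^2)^q) * t^(q-1)))]
    · rw [← ofReal_integral_eq_lintegral_ofReal]
      · rw [MeasureTheory.integral_const_mul]
        congr 1
        rw [← integral_of_le hc0.le,
          integral_rpow (Or.inl (by linarith : (-1:ℝ) < q - 1))]
        rw [show q - 1 + 1 = q by ring, Real.zero_rpow hq0.ne', sub_zero]
      · exact ((intervalIntegrable_rpow' (by linarith : (-1:ℝ) < q-1)).1).const_mul _
      · refine (ae_restrict_iff' measurableSet_Ioc).2 (ae_of_all _ (fun t ht => ?_))
        exact mul_nonneg (by positivity) (Real.rpow_nonneg ht.1.le _)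
    · obtain ⟨ht0, htc⟩ := ht
      rw [← ENNReal.ofReal_mul (by positivity)]
      congr 1
      simp only [hB]
      rw [if_pos htc, show 4*t/s^2 = (4/s^2)*t by ring,
        Real.mul_rpow (by positivity) ht0.le, Real.rpow_sub ht0, Real.rpow_one]
      have hne : t ≠ 0 := ht0.ne'
      field_simp
  have hAB : ∫⁻ t in Ioi c, ENNReal.ofReal (2*t) * ENNReal.ofReal (B t)
      = ENNReal.ofReal (2 * (c^(-q)/q)) := by
    rw [setLIntegral_congr_fun measurableSet_Ioi (fun t ht => ?_)
      (g := fun t => ENNReal.ofReal (2 * t^(-q-1)))]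
    · rw [← ofReal_integral_eq_lintegral_ofReal]
      · rw [MeasureTheory.integral_const_mul]
        congr 1
        rw [integral_Ioi_rpow_of_lt (by linarith : -q-1 < -1) hc0]
        rw [show -q-1+1 = -q by ring]
        rw [div_neg, neg_div, neg_neg]
      · exact (integrableOn_Ioi_rpow_of_lt (by linarith : -q-1 < -1) hc0).const_mul _
      · refine (ae_restrict_iff' measurableSet_Ioi).2 (ae_of_all _ (fun t ht => ?_))
        have ht0 : (0:ℝ) < t := lt_trans hc0 ht
        exact mul_nonneg (by norm_num) (Real.rpow_nonneg ht0.le _)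
    · have ht0 : (0:ℝ) < t := lt_trans hc0 ht
      have hnotle : ¬ (t ≤ s/2) := by rw [← hc]; exact not_le.2 ht
      rw [← ENNReal.ofReal_mul (by positivity)]
      congr 1
      simp only [hB]
      rw [if_neg hnotle, one_div, Real.inv_rpow ht0.le,
        show -q-1 = -(q+1) by ring, Real.rpow_neg ht0.le, Real.rpow_add ht0, Real.rpow_one]
      have h1 : t ^ q ≠ 0 := (Real.rpow_pos_of_pos ht0 q).ne'
      have hne : t ≠ 0 := ht0.ne'
      field_simp
  have hfinal : 2*(4/s^2)^q * (c^q/q) + 2 * (c^(-q)/q) = (2^(q+2)/q) / s^q := by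
    have e1 : (4/s^2)^q * c^q = (2/s)^q := by
      rw [← Real.mul_rpow (by positivity) (by positivity)]
      congr 1
      rw [hc]; field_simp; ring
    have e2 : c^(-q) = (2/s)^q := by
      rw [Real.rpow_neg hc0.le, ← Real.inv_rpow hc0.le, hc, inv_div]
    have e3 : (2/s)^q = 2^q/s^q := Real.div_rpow (by norm_num : (0:ℝ) ≤ 2) hs0.le q
    have e4 : (2:ℝ)^(q+2) = 2^q * 4 := by
      rw [Real.rpow_add (by norm_num : (0:ℝ) < 2)]
      congr 1
      rw [show (2:ℝ) = ((2:ℕ):ℝ) from by norm_num]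
      rw [Real.rpow_natCast]
      norm_num
    have hsq : s^q ≠ 0 := (Real.rpow_pos_of_pos hs0 q).ne'
    rw [show 2*(4/s^2)^q * (c^q/q) + 2 * (c^(-q)/q)
        = (2*((4/s^2)^q * c^q) + 2*(c^(-q)))/q by ring, e1, e2, e3, e4]
    field_simp
    ring
  -- assemble the chain of inequalities
  have hChain : ∫⁻ w in S, ENNReal.ofReal (F w) ≤ ENNReal.ofReal ((2^(q+2)/q) / s^q) := by
    calc ∫⁻ w in S, ENNReal.ofReal (F w)
        = ∫⁻ w in S, ENNReal.ofReal (f w) := by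
          refine setLIntegral_congr_fun hSm (fun w hw => ?_)
          rw [hFf w hw]
      _ ≤ ∫⁻ w in S', ENNReal.ofReal (f w) := lintegral_mono_set hsub
      _ ≤ ∫⁻ w in S', G w := by
          refine setLIntegral_mono hGmeas ?_
          intro w hw
          apply ENNReal.ofReal_le_ofReal
          have h1 := hw.1
          have h2 : x - w.2 < w.1 := by
            have := (abs_sub_lt_iff.1 hw.2).2
            linarith
          exact key w.1 w.2 h1 h2
      _ = ENNReal.ofReal ((2^(q+2)/q) / s^q) := by
          rw [hcompute, hsplit, hA, hAB, ← ENNReal.ofReal_add (by positivity) ?hbn, hfinal]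
          case hbn =>
            apply mul_nonneg (by norm_num)
            exact div_nonneg (Real.rpow_nonneg hc0.le _) hq0.le
  -- convert back to the Bochner integral
  have heq : (∫ w in S, F w) = (∫⁻ w in S, ENNReal.ofReal (F w)).toReal := by
    apply integral_eq_lintegral_of_nonneg_ae (ae_of_all _ hFnn)
    have hae : f =ᵐ[volume.restrict S] F := by
      refine (ae_restrict_iff' hSm).2 (ae_of_all _ (fun w hw => (hFf w hw).symm))
    exact hfmeas.aestronglyMeasurable.congr hae
  rw [show (∫ w in {w : ℝ × ℝ | 0 < w.1 ∧ 0 < w.2 ∧ |w.1 - x| < w.2},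
      |w.2 * deriv (fun t => classicalPoissonKernel t (w.1 + z)) w.2| ^ q / w.2 ^ 2) = ∫ w in S, F w
      from rfl]
  rw [heq]
  exact ENNReal.toReal_le_of_le_ofReal (by positivity) hChain
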